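/- Let n : ℕ and A : Matrix (Fin n) (Fin n) ℕ, and let A' : Matrix V' V' ℕ be the adjacency matrix of the bisected graph on V' := Fin n ⊕ (Σ q : Fin n × Fin n, Fin (A q.1 q.2)). Then for every k : ℕ and all i j : Fin n, (A ^ (k+1)) i j = (∑_{l ∈ Finset.Icc 1 (2·(k+1))} (A' ^ l) (Sum.inl i) (Sum.inl j)) − (∑_{l ∈ Finset.Icc 1 (2·k)} (A' ^ l) (Sum.inl i) (Sum.inl j)); that is, an entry of the (k+1)-st matrix power equals the number of walks of length at most 2(k+1) between the corresponding original vertices minus the number of walks of length at most 2k between them. -/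
import Mathlib


/-- Vertex type of the graph obtained from a multigraph with adjacency matrix `A`
by bisecting each edge with a new vertex. -/
abbrev bisectV (n : ℕ) (A : Matrix (Fin n) (Fin n) ℕ) : Type :=
  Fin n ⊕ (Σ q : Fin n × Fin n, Fin (A q.1 q.2))

/-- The 0/1 adjacency matrix of the bisected graph. -/
def bisectA (n : ℕ) (A : Matrix (Fin n) (Fin n) ℕ) :
    Matrix (bisectV n A) (bisectV n A) ℕ :=
  Matrix.of fun u w =>
    match u, w with
    | Sum.inl i, Sum.inr ⟨(i₀, _), _⟩ => if i = i₀ then 1 else 0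
    | Sum.inr ⟨(_, j₀), _⟩, Sum.inl j => if j = j₀ then 1 else 0
    | _, _ => 0

lemma bisect_sq_inl_inl (n : ℕ) (A : Matrix (Fin n) (Fin n) ℕ) (i j : Fin n) :
    (bisectA n A ^ 2) (Sum.inl i) (Sum.inl j) = A i j := by
  rw [pow_two, Matrix.mul_apply, Fintype.sum_sum_type]
  simp only [bisectA, Matrix.of_apply, zero_mul, Finset.sum_const_zero, zero_add]
  rw [← Finset.univ_sigma_univ, Finset.sum_sigma, Fintype.sum_prod_type]
  simp [Finset.sum_ite_eq, mul_ite, apply_ite Finset.card]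

lemma bisect_sq_inl_inr (n : ℕ) (A : Matrix (Fin n) (Fin n) ℕ) (i : Fin n)
    (s : Σ q : Fin n × Fin n, Fin (A q.1 q.2)) :
    (bisectA n A ^ 2) (Sum.inl i) (Sum.inr s) = 0 := by
  rw [pow_two, Matrix.mul_apply, Fintype.sum_sum_type]
  obtain ⟨⟨i₀, j₀⟩, c⟩ := s
  simp [bisectA]

lemma bisect_even (n : ℕ) (A : Matrix (Fin n) (Fin n) ℕ) (m : ℕ) (i : Fin n) :
    (∀ j : Fin n, (bisectA n A ^ (2 * m)) (Sum.inl i) (Sum.inl j) = (A ^ m) i j) ∧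
    (∀ s, (bisectA n A ^ (2 * m)) (Sum.inl i) (Sum.inr s) = 0) := by
  induction m with
  | zero =>
    constructor
    · intro j; simp [Matrix.one_apply]
    · intro s; simp [Matrix.one_apply]
  | succ m ih =>
    have h2 : 2 * (m + 1) = 2 * m + 2 := by ring
    rw [h2, pow_add]
    constructor
    · intro j
      rw [Matrix.mul_apply, Fintype.sum_sum_type]
      simp only [ih.1, ih.2, zero_mul, Finset.sum_const_zero, add_zero,
        bisect_sq_inl_inl]
      rw [pow_succ, Matrix.mul_apply]
    · intro s
      rw [Matrix.mul_apply, Fintype.sum_sum_type]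
      simp [ih.1, ih.2, bisect_sq_inl_inr]

lemma bisect_odd (n : ℕ) (A : Matrix (Fin n) (Fin n) ℕ) (m : ℕ) (i j : Fin n) :
    (bisectA n A ^ (2 * m + 1)) (Sum.inl i) (Sum.inl j) = 0 := by
  rw [pow_succ, Matrix.mul_apply, Fintype.sum_sum_type]
  have h := bisect_even n A m i
  simp only [h.2, zero_mul, Finset.sum_const_zero, add_zero]
  simp [bisectA]

/-- An entry of the `(k+1)`-st matrix power equals the number of walks of length
at most `2(k+1)` in the bisected graph between corresponding original vertices
minus the number of walks of length at most `2k` between them. -/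
theorem pow_succ_eq_walks_diff (n : ℕ) (A : Matrix (Fin n) (Fin n) ℕ) (k : ℕ)
    (i j : Fin n) :
    (A ^ (k + 1)) i j =
      (∑ l ∈ Finset.Icc 1 (2 * (k + 1)), (bisectA n A ^ l) (Sum.inl i) (Sum.inl j)) -
        (∑ l ∈ Finset.Icc 1 (2 * k), (bisectA n A ^ l) (Sum.inl i) (Sum.inl j)) := by
  have h1 : 2 * (k + 1) = (2 * k + 1) + 1 := by ring
  rw [h1, Finset.sum_Icc_succ_top (by omega), Finset.sum_Icc_succ_top (by omega),
    bisect_odd n A k i j, add_zero]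
  have h2 : 2 * k + 1 + 1 = 2 * (k + 1) := by ring
  rw [h2, (bisect_even n A (k + 1) i).1 j, Nat.add_sub_cancel_left]
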